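/- Let n ≥ 1, a ≥ 0, c ≥ 1 be integers, v a tuple of nonzero integers, and A_{n,k} = (-1)^k·C(n,k)/C(n+k,k). Then (1/n^c)·∑_{k=1}^{n} H_{k-1}(v)·A_{n,k}/k^a = ∑_{k=1}^{n} H_{k-1}(v)·A_{n,k}/k^{a+c} + ∑ over all (j, x) with j ≥ 0, x = (x_1,...,x_r) a nonempty tuple of positive integers with last entry x_r > a and j + x_1 + ... + x_r = a + c, of 2^r·∑_{k=1}^{n} H_{k-1}(x, v)·A_{n,k}/k^j, where (x, v) denotes concatenation. -/

import Mathlib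

open Finset

/-- Sign factor for an alternating multiple harmonic sum entry. -/
def aSgn (s : ℤ) : ℚ := if 0 < s then 1 else -1

/-- Alternating multiple harmonic sum `H_n(s₁,…,s_ℓ)` (strict indices). -/
def Hh : ℕ → List ℤ → ℚ
  | _, [] => 1
  | n, s :: r => ∑ k ∈ Finset.Icc 1 n, aSgn s ^ k / (k : ℚ) ^ s.natAbs * Hh (k - 1) r

/-- Alternating multiple harmonic star sum `H*_n(s₁,…,s_ℓ)` (weak indices). -/
def Hstar : ℕ → List ℤ → ℚ
  | _, [] => 1
  | n, s :: r => ∑ k ∈ Finset.Icc 1 n, aSgn s ^ k / (k : ℚ) ^ s.natAbs * Hstar k r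

/-- All compositions (ordered tuples of positive integers) of `w`. -/
def comps : ℕ → List (List ℕ)
  | 0 => [[]]
  | (w+1) => (List.range (w+1)).flatMap (fun j => (comps (w - j)).map (fun l => (j+1) :: l))
decreasing_by simp_wf

/-- Coerce a list of naturals to a list of integers. -/
def natList (l : List ℕ) : List ℤ := l.map (fun m => (m : ℤ))

/-!
The kernel `A n k = (-1)^k C(n,k) / C(n+k,k)` satisfies `A n (m+1) (n+m+1) = A n m (m-n)`, so its
tails telescope: `∑_{m<k≤n} A n k = A n m (m-n)/(2n)`. Writing `H_{k-1}(a+1, v)` as a sum over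
`m < k` and exchanging the two sums therefore gives the case `c = 1`,
`S_a(v)/n = S_{a+1}(v) + 2 S_0(a+1, v)` for `S_a(v) = ∑_k H_{k-1}(v) A n k / k^a` (`binomSum`).
Iterating it `c` times, every step either raises the exponent or prepends a new positive part
(with a factor `2`), and the terms produced are indexed by the compositions in the statement.
-/

section Compositions

variable {M : Type*} [AddCommMonoid M]

lemma sum_range_sum_range_sub_comm (n : ℕ) (f : ℕ → ℕ → M) :
    ∑ i ∈ range n, ∑ j ∈ range (n - i), f i j = ∑ j ∈ range n, ∑ i ∈ range (n - j), f i j :=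
  sum_comm' fun i j => by simp only [mem_range]; omega

lemma sum_map_comps_succ (w : ℕ) (f : List ℕ → M) :
    ((comps (w + 1)).map f).sum
      = ∑ p ∈ range (w + 1), ((comps (w - p)).map fun z => f ((p + 1) :: z)).sum := by
  rw [comps.eq_2, List.flatMap_def, List.map_flatten, List.sum_flatten, List.map_map,
    List.map_map, sum_eq_multiset_sum, range_val, Multiset.range, Multiset.map_coe,
    Multiset.sum_coe]
  simp only [Function.comp_def, List.map_map]

lemma sum_map_comps_succ_eq_sum_last (w : ℕ) (f : List ℕ → M) :
    ((comps (w + 1)).map f).sum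
      = ∑ i ∈ range (w + 1), ((comps (w - i)).map fun y => f (y ++ [i + 1])).sum := by
  induction w using Nat.strong_induction_on generalizing f with
  | _ w ih =>
    rw [sum_map_comps_succ, sum_range_succ, sum_range_succ, Nat.sub_self]
    congr 1
    · have first : ∀ p ∈ range w, ((comps (w - p)).map fun z => f ((p + 1) :: z)).sum
          = ∑ i ∈ range (w - p), ((comps (w - 1 - p - i)).map
              fun y => f ((p + 1) :: (y ++ [i + 1]))).sum := by
        intro p hp
        obtain ⟨d, hd⟩ : ∃ d, w - p = d + 1 := ⟨w - 1 - p, by simp at hp; omega⟩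
        rw [hd, ih d (by omega)]
        refine sum_congr rfl fun i _ => ?_
        rw [show w - 1 - p - i = d - i by omega]
      have last : ∀ i ∈ range w, ((comps (w - i)).map fun y => f (y ++ [i + 1])).sum
          = ∑ p ∈ range (w - i), ((comps (w - 1 - p - i)).map
              fun y => f ((p + 1) :: (y ++ [i + 1]))).sum := by
        intro i hi
        obtain ⟨d, hd⟩ : ∃ d, w - i = d + 1 := ⟨w - 1 - i, by simp at hi; omega⟩
        rw [hd, sum_map_comps_succ]
        refine sum_congr rfl fun p _ => ?_
        rw [show w - 1 - p - i = d - p by omega]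
        rfl
      rw [sum_congr rfl first, sum_congr rfl last, sum_range_sum_range_sub_comm]
    · simp [comps]

end Compositions

section Correction

variable (f : ℕ → List ℤ → ℚ)

def compsWeightedSum (w j b : ℕ) (v : List ℤ) : ℚ :=
  ((comps w).map fun y => (2 : ℚ) ^ (y.length + 1) * f j (natList (y ++ [b]) ++ v)).sum

/-- The second sum of the theorem, with `f j w` in place of `∑_k H_{k-1}(w) A n k / k^j`; the
tuple `x` is `y ++ [a + i + 1]`, whose weight `j + |x|` is `a + c` since `y` is a composition of
`c - 1 - i - j`. -/
def correctionSum (a c : ℕ) (v : List ℤ) : ℚ :=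
  ∑ i ∈ range c, ∑ j ∈ range (c - i), compsWeightedSum f (c - 1 - i - j) j (a + i + 1) v

lemma compsWeightedSum_zero (j b : ℕ) (v : List ℤ) :
    compsWeightedSum f 0 j b v = 2 * f j (b :: v) := by
  simp [compsWeightedSum, comps, natList]

lemma compsWeightedSum_succ (w j b : ℕ) (v : List ℤ) :
    compsWeightedSum f (w + 1) j b v
      = 2 * ∑ i ∈ range (w + 1), compsWeightedSum f (w - i) j (i + 1) (b :: v) := by
  rw [compsWeightedSum, sum_map_comps_succ_eq_sum_last, mul_sum]
  refine sum_congr rfl fun i _ => ?_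
  rw [compsWeightedSum, ← List.sum_map_mul_left]
  congr 1
  refine List.map_congr_left fun y _ => ?_
  have hl : natList (y ++ [i + 1] ++ [b]) ++ v = natList (y ++ [i + 1]) ++ (b : ℤ) :: v := by
    simp [natList]
  rw [hl, List.length_append, List.length_singleton, pow_succ]
  ring

lemma sum_range_compsWeightedSum (c b : ℕ) (v : List ℤ) :
    ∑ j ∈ range (c + 1), compsWeightedSum f (c - j) j b v
      = 2 * f c (b :: v) + 2 * correctionSum f 0 c (b :: v) := by
  have split : ∀ j ∈ range c, compsWeightedSum f (c - j) j b v
      = 2 * ∑ i ∈ range (c - j), compsWeightedSum f (c - 1 - i - j) j (0 + i + 1) (b :: v) := by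
    intro j hj
    obtain ⟨d, hd⟩ : ∃ d, c - j = d + 1 := ⟨c - 1 - j, by simp at hj; omega⟩
    rw [hd, compsWeightedSum_succ]
    congr 1
    exact sum_congr rfl fun i _ => by rw [show c - 1 - i - j = d - i by omega, zero_add]
  rw [sum_range_succ, Nat.sub_self, compsWeightedSum_zero, sum_congr rfl split, ← mul_sum,
    sum_range_sum_range_sub_comm, correctionSum, add_comm]

lemma correctionSum_succ (a c : ℕ) (v : List ℤ) :
    correctionSum f a (c + 1) v = correctionSum f (a + 1) c v + 2 * f c ((a + 1 : ℕ) :: v)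
      + 2 * correctionSum f 0 c ((a + 1 : ℕ) :: v) := by
  have head : ∑ j ∈ range (c + 1 - 0), compsWeightedSum f (c + 1 - 1 - 0 - j) j (a + 0 + 1) v
      = ∑ j ∈ range (c + 1), compsWeightedSum f (c - j) j (a + 1) v := by
    simp only [Nat.sub_zero, Nat.add_sub_cancel, Nat.add_zero]
  have rest : ∑ i ∈ range c, ∑ j ∈ range (c + 1 - (i + 1)),
      compsWeightedSum f (c + 1 - 1 - (i + 1) - j) j (a + (i + 1) + 1) v
        = correctionSum f (a + 1) c v := by
    refine sum_congr rfl fun i _ => ?_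
    rw [Nat.add_sub_add_right]
    refine sum_congr rfl fun j _ => ?_
    rw [show c + 1 - 1 - (i + 1) - j = c - 1 - i - j by omega, ← add_assoc, add_right_comm a]
  rw [correctionSum, sum_range_succ', head, rest, sum_range_compsWeightedSum, add_assoc]

end Correction

def coeffA (n k : ℕ) : ℚ := (-1) ^ k * n.choose k / (n + k).choose k

lemma coeffA_succ_mul {n m : ℕ} (h : m < n) :
    coeffA n (m + 1) * (n + m + 1) = coeffA n m * (m - n) := by
  have choose_succ : (n.choose (m + 1) : ℚ) * (m + 1) = n.choose m * (n - m) := by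
    have := congrArg (Nat.cast : ℕ → ℚ) (Nat.choose_succ_right_eq n m)
    push_cast [Nat.cast_sub h.le] at this
    exact this
  have choose_add_succ : ((n + m + 1).choose (m + 1) : ℚ) * (m + 1)
      = (n + m + 1) * (n + m).choose m := by
    exact_mod_cast (Nat.add_one_mul_choose_eq (n + m) m).symm
  have cross : (n.choose (m + 1) : ℚ) * (n + m + 1) * (n + m).choose m
      = n.choose m * (n - m) * (n + m + 1).choose (m + 1) := by
    refine mul_left_cancel₀ (Nat.cast_add_one_ne_zero m) ?_
    linear_combination ((n + m + 1) * (n + m).choose m : ℚ) * choose_succ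
      - (n.choose m * (n - m) : ℚ) * choose_add_succ
  have h₁ : ((n + m).choose m : ℚ) ≠ 0 := Nat.cast_ne_zero.mpr (Nat.choose_pos (by omega)).ne'
  have h₂ : ((n + m + 1).choose (m + 1) : ℚ) ≠ 0 :=
    Nat.cast_ne_zero.mpr (Nat.choose_pos (by omega)).ne'
  unfold coeffA
  rw [← add_assoc, pow_succ]
  field_simp
  linear_combination -cross

lemma coeffA_succ_eq_sub {n m : ℕ} (h : m < n) :
    coeffA n (m + 1)
      = coeffA n m * (m - n) / (2 * n) - coeffA n (m + 1) * ((m + 1 : ℕ) - n) / (2 * n) := by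
  have hn : (n : ℚ) ≠ 0 := Nat.cast_ne_zero.mpr (by omega)
  field_simp
  push_cast
  linear_combination coeffA_succ_mul h

lemma sum_Ioc_coeffA {n m : ℕ} (hm : m ≤ n) :
    ∑ k ∈ Ioc m n, coeffA n k = coeffA n m * (m - n) / (2 * n) := by
  set B : ℕ → ℚ := fun k => coeffA n k * (k - n) / (2 * n)
  rw [← Ico_add_one_add_one_eq_Ioc, ← sum_Ico_add']
  calc ∑ k ∈ Ico m n, coeffA n (k + 1) = ∑ k ∈ Ico m n, -(B (k + 1) - B k) :=
        sum_congr rfl fun k hk => by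
          rw [coeffA_succ_eq_sub (mem_Ico.mp hk).2]; simp only [B]; push_cast; ring
    _ = B m := by rw [sum_neg_distrib, sum_Ico_sub B hm]; simp [B]

def binomSum (n a : ℕ) (v : List ℤ) : ℚ :=
  ∑ k ∈ Icc 1 n, Hh (k - 1) v * coeffA n k / (k : ℚ) ^ a

lemma Hh_natCast_cons {b : ℕ} (hb : 0 < b) (k : ℕ) (v : List ℤ) :
    Hh k ((b : ℤ) :: v) = ∑ m ∈ Icc 1 k, Hh (m - 1) v / (m : ℚ) ^ b := by
  simp only [Hh, aSgn, Nat.cast_pos.mpr hb, if_true, one_pow, Int.natAbs_natCast]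
  exact sum_congr rfl fun m _ => by ring

lemma binomSum_zero_natCast_cons {b : ℕ} (hb : 0 < b) (n : ℕ) (v : List ℤ) :
    binomSum n 0 ((b : ℤ) :: v)
      = ∑ m ∈ Icc 1 n, Hh (m - 1) v / (m : ℚ) ^ b * (coeffA n m * (m - n) / (2 * n)) := by
  simp only [binomSum, Hh_natCast_cons hb, pow_zero, div_one, sum_mul]
  rw [sum_comm' (t' := Icc 1 n) (s' := fun m => Ioc m n) fun k m => by
    simp only [mem_Icc, mem_Ioc]; omega]
  refine sum_congr rfl fun m hm => ?_
  rw [← mul_sum, sum_Ioc_coeffA (mem_Icc.mp hm).2]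

lemma binomSum_div (n a : ℕ) (v : List ℤ) :
    binomSum n a v / n = binomSum n (a + 1) v + 2 * binomSum n 0 ((a + 1 : ℕ) :: v) := by
  rw [binomSum_zero_natCast_cons a.succ_pos, binomSum, binomSum, sum_div, mul_sum,
    ← sum_add_distrib]
  refine sum_congr rfl fun m hm => ?_
  obtain ⟨hm₁, hmn⟩ := mem_Icc.mp hm
  have hm₀ : (m : ℚ) ≠ 0 := Nat.cast_ne_zero.mpr (by omega)
  have hn₀ : (n : ℚ) ≠ 0 := Nat.cast_ne_zero.mpr (by omega)
  field_simp
  ring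

theorem binomSum_div_pow (n c a : ℕ) (v : List ℤ) :
    binomSum n a v / n ^ c = binomSum n (a + c) v + correctionSum (binomSum n) a c v := by
  induction c generalizing a v with
  | zero => simp [correctionSum]
  | succ c ih =>
    rw [pow_succ', ← div_div, binomSum_div, add_div, mul_div_assoc, ih, ih, correctionSum_succ,
      zero_add, add_right_comm a 1 c, add_assoc a c 1]
    ring

theorem stmt16_general (n a c : ℕ) (v : List ℤ) :
    (1 / (n : ℚ) ^ c) * ∑ k ∈ Finset.Icc 1 n,
        Hh (k-1) v * ((-1 : ℚ) ^ k * (n.choose k) / ((n+k).choose k)) / (k : ℚ) ^ a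
      = (∑ k ∈ Finset.Icc 1 n,
          Hh (k-1) v * ((-1 : ℚ) ^ k * (n.choose k) / ((n+k).choose k)) / (k : ℚ) ^ (a+c))
        + ∑ i ∈ Finset.range c, ∑ j ∈ Finset.range (c - i),
            ((comps (c - 1 - i - j)).map (fun y =>
              (2 : ℚ) ^ (y.length + 1) * ∑ k ∈ Finset.Icc 1 n,
                Hh (k-1) (natList (y ++ [a + i + 1]) ++ v)
                  * ((-1 : ℚ) ^ k * (n.choose k) / ((n+k).choose k))
                  / (k : ℚ) ^ j)).sum := by
  rw [one_div_mul_eq_div]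
  exact binomSum_div_pow n c a v

theorem stmt16 (n a c : ℕ) (hn : 1 ≤ n) (hc : 1 ≤ c) (v : List ℤ)
    (hv : ∀ s ∈ v, s ≠ 0) :
    (1 / (n : ℚ) ^ c) * ∑ k ∈ Finset.Icc 1 n,
        Hh (k-1) v * ((-1 : ℚ) ^ k * (n.choose k) / ((n+k).choose k)) / (k : ℚ) ^ a
      = (∑ k ∈ Finset.Icc 1 n,
          Hh (k-1) v * ((-1 : ℚ) ^ k * (n.choose k) / ((n+k).choose k)) / (k : ℚ) ^ (a+c))
        + ∑ i ∈ Finset.range c, ∑ j ∈ Finset.range (c - i),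
            ((comps (c - 1 - i - j)).map (fun y =>
              (2 : ℚ) ^ (y.length + 1) * ∑ k ∈ Finset.Icc 1 n,
                Hh (k-1) (natList (y ++ [a + i + 1]) ++ v)
                  * ((-1 : ℚ) ^ k * (n.choose k) / ((n+k).choose k))
                  / (k : ℚ) ^ j)).sum :=
  stmt16_general n a c v
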